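/- For the pp-wave metric g = x²dt² + 2dtdz + dx² + dy² and any constants v₁, v₂ ∈ ℝ, the metric ĝ = σ^{-2} g with σ(t,x,y,z) = (√2/2)(e^{-t√2/2} - e^{t√2/2})v₁ + (1/2)(e^{-t√2/2} + e^{t√2/2})v₂ is Ricci-flat on the open set where σ ≠ 0. -/

import Mathlib

/-!
Write `ĝ = σ(t)⁻² g` where `σ'' = σ / 2`, i.e. `σ` is a combination of `cosh (t/√2)` and
`sinh (t/√2)`. The Christoffel symbols of `ĝ` are polynomials in `x` and `u = σ'/σ`, and `u`
solves the Riccati equation `u' = 1/2 - u²`. Differentiating them, every Ricci component vanishes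
identically except `Ric_tt`: the profile `x²` contributes `-1`, and the conformal factor
contributes `2 (u' + u²) = 1`.
-/

open Matrix

/-- Partial derivative in the i-th coordinate direction on ℝ⁴. -/
noncomputable def pd (i : Fin 4) (f : (Fin 4 → ℝ) → ℝ) (x : Fin 4 → ℝ) : ℝ :=
  fderiv ℝ f x (Pi.single i 1)

/-- The pp-wave metric g = x²dt² + 2dtdz + dx² + dy². -/
noncomputable def ppw (p : Fin 4 → ℝ) : Matrix (Fin 4) (Fin 4) ℝ :=
  !![(p 1) ^ 2, 0, 0, 1;
     0, 1, 0, 0;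
     0, 0, 1, 0;
     1, 0, 0, 0]

/-- Christoffel symbols of a metric G. -/
noncomputable def chris (G : (Fin 4 → ℝ) → Matrix (Fin 4) (Fin 4) ℝ)
    (p : Fin 4 → ℝ) (k i j : Fin 4) : ℝ :=
  (1/2) * ∑ l, (G p)⁻¹ k l *
    (pd i (fun y => G y j l) p + pd j (fun y => G y i l) p - pd l (fun y => G y i j) p)

/-- Ricci curvature of a metric G in coordinates:
Ric_{ij} = ∂_k Γᵏ_{ij} - ∂_i Γᵏ_{kj} + Γᵏ_{kl}Γˡ_{ij} - Γᵏ_{il}Γˡ_{kj}. -/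
noncomputable def ricci (G : (Fin 4 → ℝ) → Matrix (Fin 4) (Fin 4) ℝ)
    (p : Fin 4 → ℝ) (i j : Fin 4) : ℝ :=
  (∑ k, pd k (fun y => chris G y k i j) p)
  - (∑ k, pd i (fun y => chris G y k k j) p)
  + (∑ k, ∑ l, (chris G p k k l * chris G p l i j - chris G p k i l * chris G p l k j))

/-- The Einstein scale σ. -/
noncomputable def sigmaE (v₁ v₂ : ℝ) (p : Fin 4 → ℝ) : ℝ :=
  (Real.sqrt 2 / 2) * (Real.exp (-p 0 * Real.sqrt 2 / 2)
    - Real.exp (p 0 * Real.sqrt 2 / 2)) * v₁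
  + (1/2) * (Real.exp (-p 0 * Real.sqrt 2 / 2) + Real.exp (p 0 * Real.sqrt 2 / 2)) * v₂

/-- The rescaled metric ĝ = σ⁻² g. -/
noncomputable def ghat (v₁ v₂ : ℝ) (p : Fin 4 → ℝ) : Matrix (Fin 4) (Fin 4) ℝ :=
  ((sigmaE v₁ v₂ p) ^ 2)⁻¹ • ppw p

open Filter Topology

section PartialDerivatives

variable {f g : (Fin 4 → ℝ) → ℝ} {q : Fin 4 → ℝ}

lemma pd_eq_of_hasFDerivAt {L : (Fin 4 → ℝ) →L[ℝ] ℝ} (h : HasFDerivAt f L q) (i : Fin 4) :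
    pd i f q = L (Pi.single i 1) := by
  rw [pd, h.fderiv]

lemma pd_congr (h : f =ᶠ[𝓝 q] g) (i : Fin 4) : pd i f q = pd i g q := by
  rw [pd, pd, h.fderiv_eq]

lemma pd_const (c : ℝ) (i : Fin 4) : pd i (fun _ => c) q = 0 := by
  simp [pd]

lemma pd_neg (i : Fin 4) : pd i (fun y => -f y) q = -pd i f q := by
  simp [pd, fderiv_fun_neg]

lemma pd_const_mul (c : ℝ) (i : Fin 4) : pd i (fun y => c * f y) q = c * pd i f q := by
  change fderiv ℝ (c • f) q _ = _
  rw [fderiv_const_smul_field]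
  rfl

lemma pd_mul (hf : DifferentiableAt ℝ f q) (hg : DifferentiableAt ℝ g q) (i : Fin 4) :
    pd i (fun y => f y * g y) q = pd i f q * g q + f q * pd i g q := by
  simp [pd, fderiv_fun_mul hf hg]
  ring

lemma pd_apply (k i : Fin 4) : pd i (fun y => y k) q = if i = k then 1 else 0 := by
  simp [pd_eq_of_hasFDerivAt (hasFDerivAt_apply k q), Pi.single_apply, eq_comm]

lemma hasFDerivAt_comp_apply {φ : ℝ → ℝ} {d : ℝ} (k : Fin 4) (h : HasDerivAt φ d (q k)) :
    HasFDerivAt (fun y => φ (y k)) (d • ContinuousLinearMap.proj (R := ℝ) k) q :=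
  h.comp_hasFDerivAt q (hasFDerivAt_apply k q)

lemma pd_comp_apply {φ : ℝ → ℝ} {d : ℝ} (k : Fin 4) (h : HasDerivAt φ d (q k)) (i : Fin 4) :
    pd i (fun y => φ (y k)) q = if i = k then d else 0 := by
  simp [pd_eq_of_hasFDerivAt (hasFDerivAt_comp_apply k h), Pi.single_apply, eq_comm]

end PartialDerivatives

section Scale

variable {s : ℝ → ℝ} {t : ℝ}

lemma hasDerivAt_inv_sq (hs : DifferentiableAt ℝ s t) (h0 : s t ≠ 0) :
    HasDerivAt (fun t => (s t ^ 2)⁻¹) (-2 * logDeriv s t * (s t ^ 2)⁻¹) t := by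
  refine ((hs.hasDerivAt.pow 2).inv (pow_ne_zero 2 h0)).congr_deriv ?_
  rw [logDeriv_apply, Pi.pow_apply]
  field_simp
  ring

lemma hasDerivAt_logDeriv {κ : ℝ} (hs : DifferentiableAt ℝ s t)
    (hs2 : HasDerivAt (deriv s) (κ * s t) t) (h0 : s t ≠ 0) :
    HasDerivAt (logDeriv s) (κ - logDeriv s t ^ 2) t := by
  refine (hs2.div hs.hasDerivAt h0).congr_deriv ?_
  rw [logDeriv_apply]
  field_simp

end Scale

section CoshSinh

variable (A B ω : ℝ)

lemma hasDerivAt_cosh_add_sinh (t : ℝ) :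
    HasDerivAt (fun t => A * Real.cosh (ω * t) + B * Real.sinh (ω * t))
      (ω * B * Real.cosh (ω * t) + ω * A * Real.sinh (ω * t)) t := by
  have hω := (hasDerivAt_id t).const_mul ω
  refine (((hω.cosh).const_mul A).add ((hω.sinh).const_mul B)).congr_deriv ?_
  simp only [id_eq, mul_one]
  ring

lemma deriv_cosh_add_sinh :
    deriv (fun t => A * Real.cosh (ω * t) + B * Real.sinh (ω * t)) =
      fun t => ω * B * Real.cosh (ω * t) + ω * A * Real.sinh (ω * t) :=
  funext fun t => (hasDerivAt_cosh_add_sinh A B ω t).deriv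

lemma hasDerivAt_deriv_cosh_add_sinh (t : ℝ) :
    HasDerivAt (deriv fun t => A * Real.cosh (ω * t) + B * Real.sinh (ω * t))
      (ω ^ 2 * (A * Real.cosh (ω * t) + B * Real.sinh (ω * t))) t := by
  rw [deriv_cosh_add_sinh]
  exact (hasDerivAt_cosh_add_sinh _ _ ω t).congr_deriv (by ring)

end CoshSinh

noncomputable def conformalPPWave (s : ℝ → ℝ) (p : Fin 4 → ℝ) : Matrix (Fin 4) (Fin 4) ℝ :=
  (s (p 0) ^ 2)⁻¹ • ppw p

/-- `ppwChristoffel u x k i j` is `Γᵏᵢⱼ` for `σ(t)⁻² g` at a point with `x`-coordinate `x`,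
where `u = σ'/σ`. -/
def ppwChristoffel (u x : ℝ) : Fin 4 → Matrix (Fin 4) (Fin 4) ℝ :=
  ![!![-(2 * u), 0, 0, 0; 0, 0, 0, 0; 0, 0, 0, 0; 0, 0, 0, 0],
    !![-x, -u, 0, 0; -u, 0, 0, 0; 0, 0, 0, 0; 0, 0, 0, 0],
    !![0, 0, -u, 0; 0, 0, 0, 0; -u, 0, 0, 0; 0, 0, 0, 0],
    !![x ^ 2 * u, x, 0, 0; x, u, 0, 0; 0, 0, u, 0; 0, 0, 0, 0]]

section ConformalPPWave

variable {s : ℝ → ℝ} {p : Fin 4 → ℝ}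

lemma ppw_mul_eq_one (p : Fin 4 → ℝ) :
    ppw p * !![0, 0, 0, 1; 0, 1, 0, 0; 0, 0, 1, 0; 1, 0, 0, -p 1 ^ 2] = 1 := by
  ext i j
  fin_cases i <;> fin_cases j <;> simp [ppw, Matrix.mul_apply, Fin.sum_univ_four]

lemma conformalPPWave_inv (h0 : s (p 0) ≠ 0) :
    (conformalPPWave s p)⁻¹ =
      s (p 0) ^ 2 • !![0, 0, 0, 1; 0, 1, 0, 0; 0, 0, 1, 0; 1, 0, 0, -p 1 ^ 2] := by
  apply Matrix.inv_eq_right_inv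
  rw [conformalPPWave, smul_mul_smul, ppw_mul_eq_one, inv_mul_cancel₀ (pow_ne_zero 2 h0), one_smul]

lemma differentiableAt_ppw (i j : Fin 4) : DifferentiableAt ℝ (fun y => ppw y i j) p := by
  fin_cases i <;> fin_cases j <;> simp [ppw, differentiableAt_apply]

lemma pd_ppw (m i j : Fin 4) :
    pd m (fun y => ppw y i j) p = if m = 1 ∧ i = 0 ∧ j = 0 then 2 * p 1 else 0 := by
  fin_cases i <;> fin_cases j <;>
    simp [ppw, pd_const, pd_comp_apply (φ := fun t => t ^ 2) 1 (hasDerivAt_pow 2 (p 1))]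

lemma pd_conformalPPWave (hs : DifferentiableAt ℝ s (p 0)) (h0 : s (p 0) ≠ 0) (m i j : Fin 4) :
    pd m (fun y => conformalPPWave s y i j) p =
      (if m = 0 then -2 * logDeriv s (p 0) else 0) * conformalPPWave s p i j
        + (s (p 0) ^ 2)⁻¹ * (if m = 1 ∧ i = 0 ∧ j = 0 then 2 * p 1 else 0) := by
  have hc := hasFDerivAt_comp_apply 0 (hasDerivAt_inv_sq hs h0)
  simp only [conformalPPWave, Matrix.smul_apply, smul_eq_mul]
  rw [pd_mul hc.differentiableAt (differentiableAt_ppw i j),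
    pd_comp_apply 0 (hasDerivAt_inv_sq hs h0), pd_ppw]
  split_ifs <;> ring

lemma chris_conformalPPWave (hs : DifferentiableAt ℝ s (p 0)) (h0 : s (p 0) ≠ 0)
    (k i j : Fin 4) :
    chris (conformalPPWave s) p k i j = ppwChristoffel (logDeriv s (p 0)) (p 1) k i j := by
  simp only [chris, pd_conformalPPWave hs h0, conformalPPWave_inv h0, Fin.sum_univ_four]
  fin_cases k <;> fin_cases i <;> fin_cases j <;>
    simp [conformalPPWave, ppw, ppwChristoffel] <;> field_simp <;> ring

lemma chris_conformalPPWave_eventuallyEq (hs : Differentiable ℝ s) (h0 : s (p 0) ≠ 0)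
    (k i j : Fin 4) :
    (fun y => chris (conformalPPWave s) y k i j) =ᶠ[𝓝 p]
      fun y => ppwChristoffel (logDeriv s (y 0)) (y 1) k i j := by
  have hne : ∀ᶠ y in 𝓝 p, s (y 0) ≠ 0 :=
    (hs.continuous.comp (continuous_apply 0)).continuousAt.eventually_ne h0
  filter_upwards [hne] with y hy using chris_conformalPPWave (hs _) hy k i j

theorem ricci_conformalPPWave_eq_zero (hs : Differentiable ℝ s)
    (hs2 : ∀ t, HasDerivAt (deriv s) (2⁻¹ * s t) t) (h0 : s (p 0) ≠ 0) (i j : Fin 4) :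
    ricci (conformalPPWave s) p i j = 0 := by
  have hu := hasDerivAt_logDeriv (hs _) (hs2 (p 0)) h0
  have pd_u (m : Fin 4) : pd m (fun y => logDeriv s (y 0)) p =
      if m = 0 then 2⁻¹ - logDeriv s (p 0) ^ 2 else 0 :=
    pd_comp_apply 0 hu m
  have pd_x2u (m : Fin 4) : pd m (fun y => y 1 ^ 2 * logDeriv s (y 0)) p =
      (if m = 1 then 2 * p 1 else 0) * logDeriv s (p 0)
        + p 1 ^ 2 * (if m = 0 then 2⁻¹ - logDeriv s (p 0) ^ 2 else 0) := by
    rw [pd_mul (hasFDerivAt_comp_apply 1 (hasDerivAt_pow 2 (p 1))).differentiableAt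
      (hasFDerivAt_comp_apply 0 hu).differentiableAt, pd_u,
      pd_comp_apply 1 (hasDerivAt_pow 2 (p 1))]
    norm_num
  simp only [ricci, Fin.sum_univ_four, pd_congr (chris_conformalPPWave_eventuallyEq hs h0 _ _ _),
    chris_conformalPPWave (hs _) h0]
  fin_cases i <;> fin_cases j <;>
    simp [ppwChristoffel, pd_u, pd_x2u, pd_neg, pd_const_mul, pd_apply, pd_const]
  -- only `Ric_tt` is left
  ring

end ConformalPPWave

theorem ricci_conformalPPWave_cosh_add_sinh_eq_zero (A B : ℝ) {p : Fin 4 → ℝ}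
    (h0 : A * Real.cosh (√2 / 2 * p 0) + B * Real.sinh (√2 / 2 * p 0) ≠ 0) (i j : Fin 4) :
    ricci (conformalPPWave fun t => A * Real.cosh (√2 / 2 * t) + B * Real.sinh (√2 / 2 * t))
      p i j = 0 := by
  have hω : (√2 / 2) ^ 2 = 2⁻¹ := by
    rw [div_pow, Real.sq_sqrt zero_le_two]
    norm_num
  refine ricci_conformalPPWave_eq_zero
    (fun t => (hasDerivAt_cosh_add_sinh A B _ t).differentiableAt) (fun t => ?_) h0 i j
  simpa only [hω] using hasDerivAt_deriv_cosh_add_sinh A B (√2 / 2) t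

lemma sigmaE_eq_cosh_add_sinh (v₁ v₂ : ℝ) (p : Fin 4 → ℝ) :
    sigmaE v₁ v₂ p = v₂ * Real.cosh (√2 / 2 * p 0) + -(√2 * v₁) * Real.sinh (√2 / 2 * p 0) := by
  simp only [sigmaE, Real.cosh_eq, Real.sinh_eq]
  ring_nf

/-- ĝ = σ⁻²g is Ricci-flat wherever σ ≠ 0. -/
theorem ppwave_einstein_scale_ricci_flat :
    ∀ (v₁ v₂ : ℝ) (p : Fin 4 → ℝ), sigmaE v₁ v₂ p ≠ 0 →
      ∀ i j, ricci (ghat v₁ v₂) p i j = 0 := by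
  intro v₁ v₂ p h i j
  have hghat : ghat v₁ v₂ = conformalPPWave fun t =>
      v₂ * Real.cosh (√2 / 2 * t) + -(√2 * v₁) * Real.sinh (√2 / 2 * t) :=
    funext fun q => by rw [ghat, conformalPPWave, sigmaE_eq_cosh_add_sinh]
  rw [hghat]
  exact ricci_conformalPPWave_cosh_add_sinh_eq_zero _ _ (sigmaE_eq_cosh_add_sinh v₁ v₂ p ▸ h) i j
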